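/- Suppose a partial group L is the internal semidirect product of a partial subgroup X with a partial subgroup N. Then C_X(N) = {x ∈ X : n^x = n for all n ∈ N} is a partial normal subgroup of X. -/

import Mathlib

universe u v

/-- A partial group: a set `L` with a domain `D ⊆ W(L)` of words, a (total extension of the)
partial product `Pi`, and an involutory inversion, satisfying axioms (PG1)-(PG4).
The value of `Pi` outside `D` is irrelevant. -/
structure PartialGroup (L : Type u) : Type u where
  D : Set (List L)
  Pi : List L → L
  inv : L → L
  inv_inv : ∀ g, inv (inv g) = g
  singleton_mem : ∀ g, [g] ∈ D
  append_left_mem : ∀ {u v : List L}, u ++ v ∈ D → u ∈ D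
  append_right_mem : ∀ {u v : List L}, u ++ v ∈ D → v ∈ D
  Pi_singleton : ∀ g, Pi [g] = g
  pg3_mem : ∀ u v w : List L, u ++ v ++ w ∈ D → u ++ [Pi v] ++ w ∈ D
  pg3_eq : ∀ u v w : List L, u ++ v ++ w ∈ D → Pi (u ++ v ++ w) = Pi (u ++ [Pi v] ++ w)
  pg4_mem : ∀ w ∈ D, (List.map inv w).reverse ++ w ∈ D
  pg4_eq : ∀ w ∈ D, Pi ((List.map inv w).reverse ++ w) = Pi []

namespace PartialGroup

variable {L : Type u} {L' : Type v}

/-- Inversion of a word: `(g_1,...,g_k)⁻¹ = (g_k⁻¹,...,g_1⁻¹)`. -/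
def wInv (P : PartialGroup L) (w : List L) : List L := (w.map P.inv).reverse

/-- The identity `1 = Π(∅)`. -/
def one (P : PartialGroup L) : L := P.Pi []

/-- Conjugation `x^g = Π(g⁻¹, x, g)`. -/
def cnj (P : PartialGroup L) (g x : L) : L := P.Pi [P.inv g, x, g]

/-- `x ∈ D(g)`, i.e. `(g⁻¹, x, g) ∈ D(L)`. -/
def memD (P : PartialGroup L) (g x : L) : Prop := [P.inv g, x, g] ∈ P.D

/-- `H` is a partial subgroup of `L`. -/
def IsPartialSubgroup (P : PartialGroup L) (H : Set L) : Prop :=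
  H.Nonempty ∧ (∀ g ∈ H, P.inv g ∈ H) ∧ ∀ w ∈ P.D, (∀ x ∈ w, x ∈ H) → P.Pi w ∈ H

/-- `N` is a partial normal subgroup of `L`. -/
def IsPartialNormal (P : PartialGroup L) (N : Set L) : Prop :=
  P.IsPartialSubgroup N ∧ ∀ g : L, ∀ n ∈ N, P.memD g n → P.cnj g n ∈ N

/-- `H` is a subgroup of `L`: a partial subgroup with `W(H) ⊆ D(L)`. -/
def IsSubgroup (P : PartialGroup L) (H : Set L) : Prop :=
  P.IsPartialSubgroup H ∧ ∀ w : List L, (∀ x ∈ w, x ∈ H) → w ∈ P.D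

/-- Homomorphism of partial groups. -/
def IsHom (P : PartialGroup L) (P' : PartialGroup L') (φ : L → L') : Prop :=
  ∀ w ∈ P.D, w.map φ ∈ P'.D ∧ φ (P.Pi w) = P'.Pi (w.map φ)

/-- Isomorphism of partial groups: a bijective homomorphism with `D(L)^φ = D(L')`. -/
def IsIso (P : PartialGroup L) (P' : PartialGroup L') (φ : L → L') : Prop :=
  Function.Bijective φ ∧ P.IsHom P' φ ∧ List.map φ '' P.D = P'.D

end PartialGroup

open PartialGroup

/-- For a list of pairs `((x₁,n₁),...,(xₖ,nₖ))` (with `xᵢ ∈ X`, `nᵢ ∈ N`), the word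
`w_N = (n₁^{Π(x₂,...,xₖ)}, n₂^{Π(x₃,...,xₖ)}, ..., nₖ)`. -/
def sdn {L : Type u} (P : PartialGroup L) : List (L × L) → List L
  | [] => []
  | q :: rest => P.cnj (P.Pi (rest.map Prod.fst)) q.2 :: sdn P rest

/-- `L` is the internal semidirect product of the partial subgroup `X` with the partial
subgroup `N`: axioms (SD1), (SD2), (SD3). -/
structure IsIntSemidirect {L : Type u} (P : PartialGroup L) (X N : Set L) : Prop where
  subX : P.IsPartialSubgroup X
  subN : P.IsPartialSubgroup N
  sd1 : ∀ x ∈ X, (∀ n ∈ N, P.memD x n) ∧ P.cnj x '' N = N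
  sd2 : ∀ g : L, ∃! q : L × L, q.1 ∈ X ∧ q.2 ∈ N ∧ [q.1, q.2] ∈ P.D ∧ g = P.Pi [q.1, q.2]
  sd3 : ∀ q : List (L × L), (∀ r ∈ q, r.1 ∈ X ∧ r.2 ∈ N) →
      ((q.map fun r => P.Pi [r.1, r.2]) ∈ P.D ↔
        q.map Prod.fst ∈ P.D ∧ sdn P q ∈ P.D) ∧
      ((q.map fun r => P.Pi [r.1, r.2]) ∈ P.D →
        P.Pi (q.map fun r => P.Pi [r.1, r.2]) =
          P.Pi [P.Pi (q.map Prod.fst), P.Pi (sdn P q)])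

/-!
Applying (SD3) to the pairs `(1, n), (x₁, 1), …, (xₖ, 1)` moves a factor `n ∈ N` across a word
of `X`: `Π(n, x₁, …, xₖ) = Π(Π(x₁, …, xₖ), n^{Π(x₁, …, xₖ)})`. Computing `Π(n, x, y)` this way
and, alternatively, as `Π(Π(x, n^x), y)` and comparing `N`-components by the uniqueness in (SD2)
gives `n^{Π(x, y)} = (n^x)^y`, and more generally `n^{Π(x₁, …, xₖ)} = (⋯(n^{x₁})⋯)^{xₖ}`.
Hence the elements of `X` acting trivially on `N` are closed under products, under inverses
(use the word `(x⁻¹, x)`) and under conjugation by `X` (use the word `(x⁻¹, c, x)`).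
-/

namespace PartialGroup

variable {L : Type u} (P : PartialGroup L) {u v w : List L}

lemma nil_mem : ([] : List L) ∈ P.D :=
  P.append_left_mem (v := [P.one]) (P.singleton_mem P.one)

lemma append_Pi_append_mem (h : u ++ v ++ w ∈ P.D) : u ++ P.Pi v :: w ∈ P.D := by
  simpa using P.pg3_mem u v w h

lemma Pi_append_Pi_append (h : u ++ v ++ w ∈ P.D) :
    P.Pi (u ++ P.Pi v :: w) = P.Pi (u ++ v ++ w) := by
  simpa using (P.pg3_eq u v w h).symm

lemma append_one_cons_mem (h : u ++ w ∈ P.D) : u ++ P.one :: w ∈ P.D :=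
  P.append_Pi_append_mem (v := []) (by simpa using h)

lemma Pi_append_one_cons (h : u ++ w ∈ P.D) : P.Pi (u ++ P.one :: w) = P.Pi (u ++ w) :=
  (P.Pi_append_Pi_append (v := []) (by simpa using h)).trans (by simp)

lemma append_replicate_one_mem (h : u ∈ P.D) (k : ℕ) : u ++ List.replicate k P.one ∈ P.D := by
  induction k with
  | zero => simpa using h
  | succ k ih =>
    rw [List.replicate_succ', ← List.append_assoc]
    exact P.append_one_cons_mem (w := []) (by simpa)

lemma Pi_append_replicate_one (h : u ∈ P.D) (k : ℕ) :
    P.Pi (u ++ List.replicate k P.one) = P.Pi u := by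
  induction k with
  | zero => simp
  | succ k ih =>
    rw [List.replicate_succ', ← List.append_assoc, ← ih,
      P.Pi_append_one_cons (w := []) (by simpa using P.append_replicate_one_mem h k),
      List.append_nil]

lemma pair_one_mem (g : L) : [g, P.one] ∈ P.D :=
  P.append_one_cons_mem (u := [g]) (w := []) (by simpa using P.singleton_mem g)

lemma Pi_pair_one (g : L) : P.Pi [g, P.one] = g := by
  simpa [P.Pi_singleton] using P.Pi_append_replicate_one (P.singleton_mem g) 1

lemma one_cons_mem (h : w ∈ P.D) : P.one :: w ∈ P.D :=
  P.append_one_cons_mem (u := []) h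

lemma Pi_one_cons (h : w ∈ P.D) : P.Pi (P.one :: w) = P.Pi w :=
  P.Pi_append_one_cons (u := []) h

lemma Pi_one_pair (g : L) : P.Pi [P.one, g] = g := by
  rw [P.Pi_one_cons (P.singleton_mem g), P.Pi_singleton]

lemma inv_pair_mem (g : L) : [P.inv g, g] ∈ P.D := by
  simpa using P.pg4_mem [g] (P.singleton_mem g)

lemma Pi_inv_pair (g : L) : P.Pi [P.inv g, g] = P.one := by
  simpa [one] using P.pg4_eq [g] (P.singleton_mem g)

lemma inv_one : P.inv P.one = P.one := by
  simpa [P.Pi_pair_one] using P.Pi_inv_pair P.one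

lemma cnj_one_left (g : L) : P.cnj P.one g = g := by
  rw [cnj, inv_one, P.Pi_one_cons (P.pair_one_mem g), P.Pi_pair_one]

lemma cnj_one_right (g : L) : P.cnj g P.one = P.one := by
  rw [cnj, show [P.inv g, P.one, g] = [P.inv g] ++ P.one :: [g] from rfl,
    P.Pi_append_one_cons (P.inv_pair_mem g), List.singleton_append, Pi_inv_pair]

variable {P} {H : Set L}

lemma IsPartialSubgroup.inv_mem (hH : P.IsPartialSubgroup H) {g : L} (hg : g ∈ H) :
    P.inv g ∈ H :=
  hH.2.1 g hg

lemma IsPartialSubgroup.Pi_mem (hH : P.IsPartialSubgroup H) (hw : w ∈ P.D)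
    (hwH : ∀ x ∈ w, x ∈ H) : P.Pi w ∈ H :=
  hH.2.2 w hw hwH

lemma IsPartialSubgroup.one_mem (hH : P.IsPartialSubgroup H) : P.one ∈ H :=
  hH.Pi_mem P.nil_mem (by simp)

def centralizer (P : PartialGroup L) (X N : Set L) : Set L := {x ∈ X | ∀ n ∈ N, P.cnj x n = n}

end PartialGroup

lemma sdn_map_pair_one {L : Type u} (P : PartialGroup L) (u : List L) :
    sdn P (u.map fun y => (y, P.one)) = List.replicate u.length P.one := by
  induction u with
  | nil => rfl
  | cons y u ih => simp [sdn, ih, P.cnj_one_right, List.replicate_succ]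

namespace IsIntSemidirect

variable {L : Type u} {P : PartialGroup L} {X N : Set L} {x y c n m : L} {u w : List L}

lemma cnj_mem (h : IsIntSemidirect P X N) (hx : x ∈ X) (hn : n ∈ N) : P.cnj x n ∈ N :=
  (h.sd1 x hx).2 ▸ Set.mem_image_of_mem _ hn

lemma pair_mem (h : IsIntSemidirect P X N) (hx : x ∈ X) (hn : n ∈ N) : [x, n] ∈ P.D := by
  have := (h.sd1 _ (h.subX.inv_mem hx)).1 n hn
  rw [memD, P.inv_inv] at this
  exact P.append_left_mem (v := [P.inv x]) this

lemma eq_of_Pi_pair_eq (h : IsIntSemidirect P X N) (hx : x ∈ X) (hn : n ∈ N) (hm : m ∈ N)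
    (he : P.Pi [x, n] = P.Pi [x, m]) : n = m :=
  congrArg Prod.snd <| (h.sd2 (P.Pi [x, n])).unique
    (y₁ := (x, n)) (y₂ := (x, m)) ⟨hx, hn, h.pair_mem hx hn, rfl⟩ ⟨hx, hm, h.pair_mem hx hm, he⟩

lemma Pi_pair_cons (h : IsIntSemidirect P X N) (hx : x ∈ X) (hn : n ∈ N)
    (hu : ∀ y ∈ u, y ∈ X) (hxu : x :: u ∈ P.D) :
    P.Pi [x, n] :: u ∈ P.D ∧
      P.Pi (P.Pi [x, n] :: u) = P.Pi [P.Pi (x :: u), P.cnj (P.Pi u) n] := by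
  obtain ⟨hiff, heq⟩ := h.sd3 ((x, n) :: u.map fun y => (y, P.one)) (by
    simpa using ⟨⟨hx, hn⟩, fun y hy => ⟨hu y hy, h.subN.one_mem⟩⟩)
  have hw : (((x, n) :: u.map fun y => (y, P.one)).map fun r => P.Pi [r.1, r.2]) =
      P.Pi [x, n] :: u := by
    simp [Function.comp_def, P.Pi_pair_one]
  have hX : ((x, n) :: u.map fun y => (y, P.one)).map Prod.fst = x :: u := by
    simp [Function.comp_def]
  have hN : sdn P ((x, n) :: u.map fun y => (y, P.one)) =
      [P.cnj (P.Pi u) n] ++ List.replicate u.length P.one := by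
    simp [sdn, sdn_map_pair_one, Function.comp_def]
  rw [hw, hX, hN] at hiff heq
  have hmem := hiff.2 ⟨hxu, P.append_replicate_one_mem (P.singleton_mem _) _⟩
  exact ⟨hmem, by rw [heq hmem, P.Pi_append_replicate_one (P.singleton_mem _), P.Pi_singleton]⟩

lemma cons_mem_and_Pi_cons (h : IsIntSemidirect P X N) (hn : n ∈ N)
    (hu : ∀ y ∈ u, y ∈ X) (huD : u ∈ P.D) :
    n :: u ∈ P.D ∧ P.Pi (n :: u) = P.Pi [P.Pi u, P.cnj (P.Pi u) n] := by
  simpa [P.Pi_one_pair, P.Pi_one_cons huD] using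
    h.Pi_pair_cons h.subX.one_mem hn hu (P.one_cons_mem huD)

lemma cnj_Pi_pair (h : IsIntSemidirect P X N) (hx : x ∈ X) (hy : y ∈ X) (hxy : [x, y] ∈ P.D)
    (hn : n ∈ N) : P.cnj (P.Pi [x, y]) n = P.cnj y (P.cnj x n) := by
  have hz : P.Pi [x, y] ∈ X := h.subX.Pi_mem hxy (by simp [hx, hy])
  have hm : P.cnj x n ∈ N := h.cnj_mem hx hn
  obtain ⟨hnxy, hPi_nxy⟩ := h.cons_mem_and_Pi_cons hn (u := [x, y]) (by simp [hx, hy]) hxy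
  have hnx : P.Pi [n, x] = P.Pi [x, P.cnj x n] := by
    simpa [P.Pi_singleton] using
      (h.cons_mem_and_Pi_cons hn (u := [x]) (by simp [hx]) (P.singleton_mem x)).2
  have hxmy : P.Pi [P.Pi [x, P.cnj x n], y] = P.Pi [P.Pi [x, y], P.cnj y (P.cnj x n)] := by
    simpa [P.Pi_singleton] using (h.Pi_pair_cons hx hm (u := [y]) (by simp [hy]) hxy).2
  refine h.eq_of_Pi_pair_eq hz (h.cnj_mem hz hn) (h.cnj_mem hy hm) ?_
  calc P.Pi [P.Pi [x, y], P.cnj (P.Pi [x, y]) n]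
      = P.Pi [n, x, y] := hPi_nxy.symm
    _ = P.Pi [P.Pi [n, x], y] :=
      (P.Pi_append_Pi_append (u := []) (v := [n, x]) (w := [y]) hnxy).symm
    _ = P.Pi [P.Pi [x, y], P.cnj y (P.cnj x n)] := by rw [hnx, hxmy]


lemma cnj_Pi_cons (h : IsIntSemidirect P X N) (hx : x ∈ X) (hu : ∀ y ∈ u, y ∈ X)
    (hxu : x :: u ∈ P.D) (hn : n ∈ N) :
    P.cnj (P.Pi (x :: u)) n = P.cnj (P.Pi u) (P.cnj x n) := by
  have hPi : P.Pi (x :: u) = P.Pi [x, P.Pi u] := by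
    simpa using (P.Pi_append_Pi_append (u := [x]) (w := []) (by simpa using hxu)).symm
  rw [hPi]
  exact h.cnj_Pi_pair hx (h.subX.Pi_mem (P.append_right_mem (u := [x]) hxu) hu)
    (P.append_Pi_append_mem (u := [x]) (w := []) (by simpa using hxu)) hn

lemma cnj_cnj_inv (h : IsIntSemidirect P X N) (hx : x ∈ X) (hn : n ∈ N) :
    P.cnj x (P.cnj (P.inv x) n) = n := by
  simpa [P.Pi_singleton, P.Pi_inv_pair, P.cnj_one_left] using
    (h.cnj_Pi_cons (h.subX.inv_mem hx) (u := [x]) (by simp [hx]) (P.inv_pair_mem x) hn).symm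

lemma inv_mem_centralizer (h : IsIntSemidirect P X N) (hc : c ∈ P.centralizer X N) :
    P.inv c ∈ P.centralizer X N := by
  refine ⟨h.subX.inv_mem hc.1, fun n hn => ?_⟩
  have := h.cnj_cnj_inv hc.1 hn
  rwa [hc.2 _ (h.cnj_mem (h.subX.inv_mem hc.1) hn)] at this

lemma Pi_mem_centralizer (h : IsIntSemidirect P X N) (hw : w ∈ P.D)
    (hwC : ∀ g ∈ w, g ∈ P.centralizer X N) : P.Pi w ∈ P.centralizer X N := by
  induction w with
  | nil => exact ⟨h.subX.one_mem, fun n _ => P.cnj_one_left n⟩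
  | cons a t ih =>
    obtain ⟨haX, ha⟩ := hwC a List.mem_cons_self
    have htC : P.Pi t ∈ P.centralizer X N :=
      ih (P.append_right_mem (u := [a]) hw) fun g hg => hwC g (List.mem_cons_of_mem a hg)
    have htX : ∀ y ∈ t, y ∈ X := fun y hy => (hwC y (List.mem_cons_of_mem a hy)).1
    refine ⟨h.subX.Pi_mem hw fun y hy => (hwC y hy).1, fun n hn => ?_⟩
    rw [h.cnj_Pi_cons haX htX hw hn, ha n hn, htC.2 n hn]

lemma cnj_mem_centralizer (h : IsIntSemidirect P X N) (hx : x ∈ X)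
    (hc : c ∈ P.centralizer X N) (hxc : P.memD x c) : P.cnj x c ∈ P.centralizer X N := by
  have hx' : P.inv x ∈ X := h.subX.inv_mem hx
  refine ⟨h.subX.Pi_mem hxc (by simp [hx', hc.1, hx]), fun n hn => ?_⟩
  rw [show P.cnj x c = P.Pi [P.inv x, c, x] from rfl,
    h.cnj_Pi_cons hx' (by simp [hc.1, hx]) hxc hn,
    h.cnj_Pi_pair hc.1 hx (P.append_right_mem (u := [P.inv x]) hxc) (h.cnj_mem hx' hn),
    hc.2 _ (h.cnj_mem hx' hn), h.cnj_cnj_inv hx hn]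

end IsIntSemidirect

theorem stmt14 {L : Type u} (P : PartialGroup L) (X N : Set L)
    (h : IsIntSemidirect P X N) :
    {x ∈ X | ∀ n ∈ N, P.cnj x n = n} ⊆ X ∧
    ({x ∈ X | ∀ n ∈ N, P.cnj x n = n} : Set L).Nonempty ∧
    (∀ g ∈ {x ∈ X | ∀ n ∈ N, P.cnj x n = n}, P.inv g ∈ {x ∈ X | ∀ n ∈ N, P.cnj x n = n}) ∧
    (∀ w ∈ P.D, (∀ g ∈ w, g ∈ {x ∈ X | ∀ n ∈ N, P.cnj x n = n}) →
      P.Pi w ∈ {x ∈ X | ∀ n ∈ N, P.cnj x n = n}) ∧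
    (∀ x ∈ X, ∀ c ∈ {x ∈ X | ∀ n ∈ N, P.cnj x n = n},
      P.memD x c → P.cnj x c ∈ {x ∈ X | ∀ n ∈ N, P.cnj x n = n}) :=
  ⟨fun _ hc => hc.1, ⟨P.one, h.Pi_mem_centralizer P.nil_mem (by simp)⟩,
    fun _ hc => h.inv_mem_centralizer hc, fun _ hw hwC => h.Pi_mem_centralizer hw hwC,
    fun _ hx _ hc hxc => h.cnj_mem_centralizer hx hc hxc⟩
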